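/- arXiv:2304.07641 — 6 statements merged into one kernel-verified Lean document; each statement's English description precedes it below -/
import Mathlib

section
/- Assume the filtration setup. If N is a finitely generated R-module, n ≥ 0 is an integer, 1 ≤ i ≤ t, Tor_n^R(M_i, N) = 0, and M_{i-1} is faithful as an R-module (its R-annihilator is zero), then the projective dimension of N over R is at most n. -/
/-!
Let `F` be a minimal free resolution of `N`, so that all differentials `∂` have entries in `𝔪`,
and put `A = M_i ⊆ W = M_{i-1}`. Since `𝔪 W ⊆ A`, the image of `W ⊗ ∂_{n+1}` lies in the image
of `A ⊗ F_n`; as `Tor_n^R(A, N) = 0` and `F_{n-1}` is flat, a diagram chase gives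
`W ⊗ F_{n+1} = ker (W ⊗ ∂_{n+1}) + im (A ⊗ F_{n+1})`. The second summand lies in
`Jac(S) · (W ⊗ F_{n+1})` because `A ⊆ Jac(S) · W`, so Nakayama's lemma over `S` gives
`W ⊗ ∂_{n+1} = 0`, and faithfulness of `W` gives `∂_{n+1} = 0`. Then `∂_{n+2}` is surjective,
so `Hom(F, L)` is exact in degree `n + 1` and `Ext^{n+1}_R(N, L) = 0`.
-/

open CategoryTheory IsLocalRing

/-- `N` has projective dimension at most `n` over `R`:
`Ext^{n+1}_R(N, L)` vanishes for every `R`-module `L`. -/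
def HasPdLE (R : Type) [CommRing R] (N : Type) [AddCommGroup N] [Module R N] (n : ℕ) : Prop :=
  ∀ L : ModuleCat.{0} R,
    Subsingleton (((Ext R (ModuleCat.{0} R) (n + 1)).obj (Opposite.op (ModuleCat.of R N))).obj L)

open Limits TensorProduct LinearMap

universe u

theorem Submodule.mem_smul_top_of_forall_mem {ι R : Type*} [CommSemiring R] [Fintype ι]
    [DecidableEq ι] {I : Ideal R} {v : ι → R} (hv : ∀ i, v i ∈ I) :
    v ∈ I • (⊤ : Submodule R (ι → R)) := by
  rw [← Finset.univ_sum_single v]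
  refine Submodule.sum_mem _ fun i _ => ?_
  rw [← mul_one (v i), ← smul_eq_mul, Pi.single_smul']
  exact Submodule.smul_mem_smul (hv i) trivial

theorem Submodule.span_range_comp_succAbove_eq_top {R K : Type*} [CommRing R] [AddCommGroup K]
    [Module R K] {r : ℕ} {x : Fin (r + 1) → K} (hx : span R (Set.range x) = ⊤)
    {v : Fin (r + 1) → R} (hv : ∑ i, v i • x i = 0) {j : Fin (r + 1)} (hj : IsUnit (v j)) :
    span R (Set.range (x ∘ j.succAbove)) = ⊤ := by
  set N := span R (Set.range (x ∘ j.succAbove))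
  have hsucc : ∀ i, x (j.succAbove i) ∈ N := fun i => subset_span ⟨i, rfl⟩
  have hxj : x j ∈ N := by
    rw [Fin.sum_univ_succAbove _ j, add_eq_zero_iff_eq_neg] at hv
    rw [← inv_smul_smul hj.unit (x j), Units.smul_def hj.unit, IsUnit.unit_spec, hv]
    exact N.smul_mem _ (N.neg_mem (N.sum_mem fun i _ => N.smul_mem _ (hsucc i)))
  rw [eq_top_iff, ← hx, span_le]
  rintro _ ⟨i, rfl⟩
  rcases Fin.eq_self_or_eq_succAbove j i with rfl | ⟨k, rfl⟩
  exacts [hxj, hsucc k]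

theorem IsLocalRing.exists_surjective_ker_le_maximalIdeal_smul {R : Type*} [CommRing R]
    [IsLocalRing R] (K : Type*) [AddCommGroup K] [Module R K] [Module.Finite R K] :
    ∃ (r : ℕ) (π : (Fin r → R) →ₗ[R] K),
      Function.Surjective π ∧ ker π ≤ maximalIdeal R • ⊤ := by
  suffices ∀ r (x : Fin r → K), Submodule.span R (Set.range x) = ⊤ →
      ∃ (r : ℕ) (π : (Fin r → R) →ₗ[R] K), Function.Surjective π ∧ ker π ≤ maximalIdeal R • ⊤ by
    obtain ⟨r, x, hx⟩ := Module.Finite.exists_fin (R := R) (M := K)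
    exact this r x hx
  intro r
  induction r with
  | zero => exact fun x hx => ⟨0, Fintype.linearCombination R x,
      by rw [← range_eq_top, Fintype.range_linearCombination, hx],
      fun v _ => Submodule.mem_smul_top_of_forall_mem finZeroElim⟩
  | succ r ih =>
    intro x hx
    by_cases hker : ker (Fintype.linearCombination R x) ≤ maximalIdeal R • ⊤
    · exact ⟨r + 1, Fintype.linearCombination R x,
        by rw [← range_eq_top, Fintype.range_linearCombination, hx], hker⟩
    obtain ⟨v, hv, hvm⟩ := SetLike.not_le_iff_exists.mp hker
    obtain ⟨j, hj⟩ := not_forall.mp (mt Submodule.mem_smul_top_of_forall_mem hvm)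
    rw [mem_ker, Fintype.linearCombination_apply] at hv
    exact ih _ (Submodule.span_range_comp_succAbove_eq_top hx hv (notMem_maximalIdeal.mp hj))

structure MinimalFreeResolution (R : Type u) [CommRing R] [IsLocalRing R] (N : Type u)
    [AddCommGroup N] [Module R N] where
  rank : ℕ → ℕ
  ε : (Fin (rank 0) → R) →ₗ[R] N
  d : ∀ j, (Fin (rank (j + 1)) → R) →ₗ[R] (Fin (rank j) → R)
  ε_surjective : Function.Surjective ε
  exact_zero : Function.Exact (d 0) ε
  exact_succ : ∀ j, Function.Exact (d (j + 1)) (d j)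
  range_d_le : ∀ j, range (d j) ≤ maximalIdeal R • ⊤

namespace MinimalFreeResolution

variable {R : Type u} [CommRing R] [IsLocalRing R] {N : Type u} [AddCommGroup N] [Module R N]

theorem nonempty [IsNoetherianRing R] [Module.Finite R N] :
    Nonempty (MinimalFreeResolution R N) := by
  have hcover (p : ℕ) (K : Submodule R (Fin p → R)) :
      ∃ (q : ℕ) (f : (Fin q → R) →ₗ[R] (Fin p → R)),
        range f = K ∧ ker f ≤ maximalIdeal R • ⊤ := by
    obtain ⟨q, π, hπ, hker⟩ := exists_surjective_ker_le_maximalIdeal_smul (R := R) K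
    refine ⟨q, K.subtype ∘ₗ π, ?_, ?_⟩
    · rw [range_comp, range_eq_top.mpr hπ, Submodule.map_top, Submodule.range_subtype]
    · rwa [ker_comp_of_ker_eq_bot _ K.ker_subtype]
  choose q f hf_range hf_ker using hcover
  obtain ⟨r, ε, hε, hεker⟩ := exists_surjective_ker_le_maximalIdeal_smul (R := R) N
  -- the `j`-th syzygy of `N`, as a submodule of the `j`-th free module
  let syz : ℕ → Σ p, Submodule R (Fin p → R) :=
    Nat.rec ⟨r, ker ε⟩ fun _ s => ⟨q s.1 s.2, ker (f s.1 s.2)⟩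
  exact ⟨{
    rank j := (syz j).1
    ε := ε
    d j := f (syz j).1 (syz j).2
    ε_surjective := hε
    exact_zero := exact_iff.mpr (hf_range _ _).symm
    exact_succ j := exact_iff.mpr (hf_range _ _).symm
    range_d_le j := by
      rw [hf_range]
      cases j
      exacts [hεker, hf_ker _ _] }⟩

variable (res : MinimalFreeResolution R N)

noncomputable def complex : ChainComplex (ModuleCat R) ℕ :=
  ChainComplex.of (fun j => ModuleCat.of R (Fin (res.rank j) → R))
    (fun j => ModuleCat.ofHom (res.d j))
    (fun j => ModuleCat.hom_ext (res.exact_succ j).linearMap_comp_eq_zero)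

theorem complex_d_succ (j : ℕ) : res.complex.d (j + 1) j = ModuleCat.ofHom (res.d j) := by
  simp [complex]

noncomputable def projectiveResolution : ProjectiveResolution (ModuleCat.of R N) where
  complex := res.complex
  projective j := ModuleCat.projective_of_free (Pi.basisFun R (Fin (res.rank j)))
  π := (ChainComplex.toSingle₀Equiv _ _).symm ⟨ModuleCat.ofHom res.ε, by
    rw [complex_d_succ]
    exact ModuleCat.hom_ext res.exact_zero.linearMap_comp_eq_zero⟩
  quasiIso := ⟨fun j => by
    cases j with
    | zero =>
      rw [ChainComplex.quasiIsoAt₀_iff, ShortComplex.quasiIso_iff_of_zeros' _ rfl rfl rfl,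
        ShortComplex.ShortExact.moduleCat_exact_iff_function_exact]
      exact ⟨res.exact_zero, (ModuleCat.epi_iff_surjective _).mpr res.ε_surjective⟩
    | succ j =>
      rw [quasiIsoAt_iff_exactAt' _ _ (ChainComplex.exactAt_succ_single_obj _ _),
        HomologicalComplex.exactAt_iff' _ (j + 2) (j + 1) j (by simp) (by simp),
        ShortComplex.ShortExact.moduleCat_exact_iff_function_exact]
      change Function.Exact (res.complex.d (j + 2) (j + 1)) (res.complex.d (j + 1) j)
      rw [complex_d_succ, complex_d_succ]
      exact res.exact_succ j⟩

instance (j : ℕ) : Module.Free R (res.projectiveResolution.complex.X j) :=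
  inferInstanceAs (Module.Free R (Fin (res.rank j) → R))

instance (j : ℕ) : Module.Finite R (res.projectiveResolution.complex.X j) :=
  inferInstanceAs (Module.Finite R (Fin (res.rank j) → R))

end MinimalFreeResolution

namespace CategoryTheory.ProjectiveResolution

theorem exact_lTensor_of_subsingleton_tor {R : Type u} [CommRing R] {X : ModuleCat.{u} R}
    (P : ProjectiveResolution X) (A : Type u) [AddCommGroup A] [Module R A] (n : ℕ)
    (h : Subsingleton (((Tor (ModuleCat R) n).obj (ModuleCat.of R A)).obj X)) :
    Function.Exact (lTensor A (P.complex.d (n + 1) n).hom)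
      (lTensor A (P.complex.d n (n - 1)).hom) := by
  have hTor : IsZero (((Tor (ModuleCat R) n).obj (ModuleCat.of R A)).obj X) :=
    ModuleCat.isZero_of_subsingleton _
  have hexact : ((((MonoidalCategory.tensoringLeft _).obj (ModuleCat.of R A)).mapHomologicalComplex
      _).obj P.complex).ExactAt n := by
    rw [HomologicalComplex.exactAt_iff_isZero_homology]
    exact IsZero.of_iso hTor (P.isoLeftDerivedObj _ n).symm
  rwa [HomologicalComplex.exactAt_iff' _ (n + 1) n (n - 1) (by simp) (by cases n <;> simp),
    ShortComplex.ShortExact.moduleCat_exact_iff_function_exact] at hexact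

theorem isZero_ext_succ_of_d_eq_zero {R : Type*} [Ring R] {C : Type*} [Category C] [Abelian C]
    [Linear R C] [EnoughProjectives C] {X : C} (P : ProjectiveResolution X) {n : ℕ}
    (h : P.complex.d (n + 1) n = 0) (Y : C) :
    IsZero (((Ext R C (n + 1)).obj (Opposite.op X)).obj Y) := by
  have : Epi (P.complex.d (n + 2) (n + 1)) := (P.exact_succ n).epi_f h
  refine IsZero.of_iso ?_ (P.isoExt (n + 1) Y)
  have hf : (P.complex.linearYonedaObj R Y).d n (n + 1) = 0 := by
    ext (x : P.complex.X n ⟶ Y)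
    change P.complex.d (n + 1) n ≫ x = 0
    rw [h, Limits.zero_comp]
  rw [← HomologicalComplex.exactAt_iff_isZero_homology,
    HomologicalComplex.exactAt_iff' _ n (n + 1) (n + 2) (by simp) (by simp),
    ShortComplex.exact_iff_mono _ hf, ModuleCat.mono_iff_injective]
  exact fun f g hfg => (cancel_epi _).mp hfg

end CategoryTheory.ProjectiveResolution

section TensorComplex

variable {R : Type*} [CommRing R]

theorem exists_lTensor_rTensor_eq_lTensor {A W F₂ F₁ F₀ : Type*} [AddCommGroup A] [Module R A]
    [AddCommGroup W] [Module R W] [AddCommGroup F₂] [Module R F₂] [AddCommGroup F₁] [Module R F₁]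
    [AddCommGroup F₀] [Module R F₀] [Module.Flat R F₀]
    {ι : A →ₗ[R] W} (hι : Function.Injective ι) {d₂ : F₂ →ₗ[R] F₁} {d₁ : F₁ →ₗ[R] F₀}
    (hd : d₁ ∘ₗ d₂ = 0) (hex : Function.Exact (lTensor A d₂) (lTensor A d₁))
    (hrange : range (lTensor W d₂) ≤ range (rTensor F₁ ι)) (z : W ⊗[R] F₂) :
    ∃ b : A ⊗[R] F₂, lTensor W d₂ (rTensor F₂ ι b) = lTensor W d₂ z := by
  obtain ⟨a, ha⟩ := hrange ⟨z, rfl⟩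
  have hcycle : lTensor A d₁ a = 0 := by
    apply Module.Flat.rTensor_preserves_injective_linearMap ι hι
    rw [map_zero, ← LinearMap.comp_apply, rTensor_comp_lTensor, ← lTensor_comp_rTensor,
      LinearMap.comp_apply, ha, ← LinearMap.comp_apply, ← lTensor_comp, hd, lTensor_zero,
      LinearMap.zero_apply]
  obtain ⟨b, rfl⟩ := (hex a).mp hcycle
  refine ⟨b, ?_⟩
  rw [← ha, ← LinearMap.comp_apply, lTensor_comp_rTensor, ← rTensor_comp_lTensor,
    LinearMap.comp_apply]

theorem eq_zero_of_lTensor_eq_zero {W F₂ F₁ : Type*} [AddCommGroup W] [Module R W]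
    [FaithfulSMul R W] [AddCommGroup F₂] [Module R F₂] [AddCommGroup F₁] [Module R F₁]
    [Module.Free R F₁] {d : F₂ →ₗ[R] F₁} (h : lTensor W d = 0) : d = 0 := by
  let b := Module.Free.chooseBasis R F₁
  refine LinearMap.ext fun f => b.ext_elem fun k => ?_
  rw [LinearMap.zero_apply, map_zero, Finsupp.zero_apply]
  refine eq_of_smul_eq_smul (M := R) (α := W) fun w => ?_
  simpa using congr_arg (TensorProduct.rid R W ∘ lTensor W (b.coord k))
    (LinearMap.congr_fun h (w ⊗ₜ f))

end TensorComplex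

section Nakayama

variable {R S M : Type*} [CommRing R] [CommRing S] [Algebra R S] [AddCommGroup M] [Module R M]
  [Module S M] [IsScalarTower R S M] {A W : Submodule S M}

theorem range_lTensor_le_range_rTensor_inclusion {I : Ideal R}
    (hIWA : I • W.restrictScalars R ≤ A.restrictScalars R) (hAW : A ≤ W)
    {F₂ F₁ : Type*} [AddCommGroup F₂] [Module R F₂] [AddCommGroup F₁] [Module R F₁]
    {d : F₂ →ₗ[R] F₁} (hd : range d ≤ I • ⊤) :
    range (lTensor W d) ≤ range (rTensor F₁ ((Submodule.inclusion hAW).restrictScalars R)) := by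
  have htmul (w : W) {v : F₁} (hv : v ∈ I • (⊤ : Submodule R F₁)) :
      w ⊗ₜ[R] v ∈ range (rTensor F₁ ((Submodule.inclusion hAW).restrictScalars R)) := by
    induction hv using Submodule.smul_induction_on' with
    | smul r hr y _ =>
      exact ⟨⟨r • (w : M), hIWA (Submodule.smul_mem_smul hr w.2)⟩ ⊗ₜ y, by
        rw [rTensor_tmul, ← smul_tmul]; rfl⟩
    | add x _ y _ hx hy => rw [tmul_add]; exact add_mem hx hy
  rintro _ ⟨z, rfl⟩
  induction z using TensorProduct.induction_on with
  | zero => simp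
  | tmul w f => exact htmul w (hd ⟨f, rfl⟩)
  | add x y hx hy => rw [map_add]; exact add_mem hx hy

theorem rTensor_inclusion_mem_smul_top {J : Ideal S} (hAJW : A ≤ J • W)
    {F : Type*} [AddCommGroup F] [Module R F] (b : A ⊗[R] F) :
    rTensor F ((Submodule.inclusion (hAJW.trans Submodule.smul_le_right)).restrictScalars R) b ∈
      J • (⊤ : Submodule S (W ⊗[R] F)) := by
  induction b using TensorProduct.induction_on with
  | zero => simp
  | tmul a f =>
    have ha : Submodule.inclusion (hAJW.trans Submodule.smul_le_right) a ∈
        J • (⊤ : Submodule S W) :=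
      (Submodule.mem_smul_top_iff _ _ _).mpr (hAJW a.2)
    have := Submodule.mem_map_of_mem (f := (AlgebraTensorModule.mk R S W F).flip f) ha
    rw [Submodule.map_smul''] at this
    exact Submodule.smul_mono le_rfl le_top this
  | add x y hx hy => rw [map_add]; exact add_mem hx hy

theorem lTensor_eq_zero_of_le_jacobson_smul [Module.Finite S W] (I : Ideal R)
    (hIWA : I • W.restrictScalars R ≤ A.restrictScalars R)
    (hAJW : A ≤ (⊥ : Ideal S).jacobson • W)
    {F₂ F₁ F₀ : Type*} [AddCommGroup F₂] [Module R F₂] [AddCommGroup F₁] [Module R F₁]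
    [AddCommGroup F₀] [Module R F₀] [Module.Finite R F₂] [Module.Flat R F₀]
    {d₂ : F₂ →ₗ[R] F₁} {d₁ : F₁ →ₗ[R] F₀} (hd : d₁ ∘ₗ d₂ = 0) (hd₂ : range d₂ ≤ I • ⊤)
    (hex : Function.Exact (lTensor A d₂) (lTensor A d₁)) :
    lTensor W d₂ = 0 := by
  have hAW : A ≤ W := hAJW.trans Submodule.smul_le_right
  let ι := (Submodule.inclusion hAW).restrictScalars R
  have : Module.Finite S (W ⊗[R] F₂) :=
    Module.Finite.equiv (AlgebraTensorModule.cancelBaseChange R S S W F₂)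
  let Φ : W ⊗[R] F₂ →ₗ[S] W ⊗[R] F₁ := AlgebraTensorModule.lTensor S W d₂
  have hcover : ⊤ ≤ ker Φ ⊔ (⊥ : Ideal S).jacobson • ⊤ := by
    intro z _
    obtain ⟨b, hb⟩ := exists_lTensor_rTensor_eq_lTensor (R := R) (ι := ι)
      (Submodule.inclusion_injective hAW) hd hex
      (range_lTensor_le_range_rTensor_inclusion hIWA hAW hd₂) z
    refine Submodule.mem_sup.mpr ⟨z - rTensor F₂ ι b, ?_, _, rTensor_inclusion_mem_smul_top hAJW b,
      sub_add_cancel _ _⟩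
    simp [Φ, hb]
  exact LinearMap.ext fun z =>
    Submodule.le_of_le_smul_of_le_jacobson_bot Module.Finite.fg_top le_rfl hcover trivial

end Nakayama

theorem pd_le_of_tor_vanishing_faithful_general
    (R : Type) [CommRing R] [IsNoetherianRing R] [IsLocalRing R]
    (S : Type) [CommRing S] [IsNoetherianRing S] [Algebra R S]
    (M : Type) [AddCommGroup M] [Module R M] [Module S M] [IsScalarTower R S M]
    [Module.Finite S M]
    (t : ℕ)
    (Mfil : ℕ → Submodule S M)
    (hlow : ∀ i, 1 ≤ i → i ≤ t →
      maximalIdeal R • (Mfil (i - 1)).restrictScalars R ≤ (Mfil i).restrictScalars R)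
    (hhigh : ∀ i, 1 ≤ i → i ≤ t → Mfil i ≤ (⊥ : Ideal S).jacobson • Mfil (i - 1))
    (N : Type) [AddCommGroup N] [Module R N] [Module.Finite R N]
    (n : ℕ) (i : ℕ) (hi1 : 1 ≤ i) (hit : i ≤ t)
    (hvanish : Subsingleton
      (((Tor (ModuleCat R) n).obj (ModuleCat.of R ↥(Mfil i))).obj (ModuleCat.of R N)))
    (hfaithful : ∀ r : R, (∀ x : ↥(Mfil (i - 1)), r • x = 0) → r = 0) :
    HasPdLE R N n := by
  obtain ⟨res⟩ := MinimalFreeResolution.nonempty (R := R) (N := N)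
  let P := res.projectiveResolution
  have : FaithfulSMul R (Mfil (i - 1)) := Module.annihilator_eq_bot.mp <|
    (Submodule.eq_bot_iff _).mpr fun r hr => hfaithful r (Module.mem_annihilator.mp hr)
  have hd : P.complex.d (n + 1) n = ModuleCat.ofHom (res.d n) := res.complex_d_succ n
  have hcomp : (P.complex.d n (n - 1)).hom ∘ₗ (P.complex.d (n + 1) n).hom = 0 := by
    rw [← ModuleCat.hom_comp, P.complex.d_comp_d, ModuleCat.hom_zero]
  have hW := lTensor_eq_zero_of_le_jacobson_smul (maximalIdeal R) (hlow i hi1 hit)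
    (hhigh i hi1 hit) hcomp (by rw [hd]; exact res.range_d_le n)
    (P.exact_lTensor_of_subsingleton_tor (Mfil i) n hvanish)
  have hzero : P.complex.d (n + 1) n = 0 := ModuleCat.hom_ext (eq_zero_of_lTensor_eq_zero hW)
  exact fun L => ModuleCat.subsingleton_of_isZero (P.isZero_ext_succ_of_d_eq_zero hzero L)

theorem pd_le_of_tor_vanishing_faithful
    (R : Type) [CommRing R] [IsNoetherianRing R] [IsLocalRing R]
    (S : Type) [CommRing S] [IsNoetherianRing S] [Algebra R S]
    (hmS : (maximalIdeal R).map (algebraMap R S) ≤ (⊥ : Ideal S).jacobson)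
    (M : Type) [AddCommGroup M] [Module R M] [Module S M] [IsScalarTower R S M]
    [Nontrivial M] [Module.Finite S M]
    (t : ℕ) (ht : 1 ≤ t)
    (Mfil : ℕ → Submodule S M)
    (hM0 : Mfil 0 = ⊤)
    (hlow : ∀ i, 1 ≤ i → i ≤ t →
      maximalIdeal R • (Mfil (i - 1)).restrictScalars R ≤ (Mfil i).restrictScalars R)
    (hhigh : ∀ i, 1 ≤ i → i ≤ t → Mfil i ≤ (⊥ : Ideal S).jacobson • Mfil (i - 1))
    (N : Type) [AddCommGroup N] [Module R N] [Module.Finite R N]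
    (n : ℕ) (i : ℕ) (hi1 : 1 ≤ i) (hit : i ≤ t)
    (hvanish : Subsingleton
      (((Tor (ModuleCat R) n).obj (ModuleCat.of R ↥(Mfil i))).obj (ModuleCat.of R N)))
    (hfaithful : ∀ r : R, (∀ x : ↥(Mfil (i - 1)), r • x = 0) → r = 0) :
    HasPdLE R N n :=
  pd_le_of_tor_vanishing_faithful_general R S M t Mfil hlow hhigh N n i hi1 hit hvanish hfaithful
end

section
/- Assume the filtration setup and that some element of m is a non-zero-divisor on M. If N is a finitely generated R-module, n ≥ 0 is an integer, and 1 ≤ i ≤ t is such that Ext^n_R(N, M_i) = 0, then Ext^n_R(N, M_{i-1}) = 0. -/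
/-!
Compute `Ext` with a minimal free resolution `F` of `N`, i.e. one with `d(F) ⊆ 𝔪 F`, and pick
`r ∈ 𝔪` regular on `M`. For a cocycle `α : Fₙ → M_{i-1}`, `r α` is a cocycle with values in
`M_i ⊇ 𝔪 M_{i-1}`, hence a coboundary. So `r α` lies in the `S`-module `B` of coboundaries
`φ ∘ d` with `φ : Fₙ₋₁ → M_{i-1}`. By minimality each such `φ ∘ d` again takes values in `M_i`,
so it is the coboundary of a map into `M_i ⊆ J M_{i-1}` (`J` the Jacobson radical of `S`). Hence
`B = J B`, and since `B` is finitely generated over `S`, Nakayama gives `B = 0`. Therefore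
`r α = 0`, and `α = 0` because `r` is regular.
-/

universe u

open CategoryTheory IsLocalRing

theorem Submodule.mem_ideal_smul_top_of_forall_mem {R ι : Type*} [CommSemiring R] [Fintype ι]
    {I : Ideal R} {x : ι → R} (hx : ∀ c, x c ∈ I) : x ∈ I • (⊤ : Submodule R (ι → R)) := by
  classical
  rw [pi_eq_sum_univ x]
  exact Submodule.sum_mem _ fun c _ => Submodule.smul_mem_smul (hx c) trivial

theorem Submodule.mem_span_image_compl_of_sum_smul_eq_zero {R A ι : Type*} [Ring R]
    [AddCommGroup A] [Module R A] [Fintype ι] [DecidableEq ι] {s : ι → A} {v : ι → R}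
    (hv : ∑ j, v j • s j = 0) {c : ι} (hc : IsUnit (v c)) : s c ∈ span R (s '' {c}ᶜ) := by
  have hrest : ∑ j ∈ Finset.univ.erase c, v j • s j ∈ span R (s '' {c}ᶜ) :=
    sum_mem fun j hj => smul_mem _ _ (subset_span ⟨j, Finset.ne_of_mem_erase hj, rfl⟩)
  rw [← Finset.add_sum_erase _ _ (Finset.mem_univ c), add_eq_zero_iff_eq_neg] at hv
  rw [← smul_mem_iff_of_isUnit _ hc, hv]
  exact neg_mem hrest

namespace ModuleCat

variable {R : Type u} [Ring R] {F : ℕ → Type u} [∀ j, AddCommGroup (F j)] [∀ j, Module R (F j)]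
  [∀ j, Module.Projective R (F j)] {N : Type u} [AddCommGroup N] [Module R N]
  (δ : ∀ j, F (j + 1) →ₗ[R] F j) (π : F 0 →ₗ[R] N) (hπ : Function.Surjective π)
  (h₀ : Function.Exact (δ 0) π) (hδ : ∀ j, Function.Exact (δ (j + 1)) (δ j))

noncomputable def projectiveResolutionOfExact : ProjectiveResolution (ModuleCat.of R N) where
  complex := ChainComplex.of (fun j => ModuleCat.of R (F j)) (fun j => ModuleCat.ofHom (δ j))
    fun j => ModuleCat.hom_ext (hδ j).linearMap_comp_eq_zero
  projective j := by dsimp; infer_instance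
  π := (ChainComplex.toSingle₀Equiv _ _).symm
    ⟨ModuleCat.ofHom π, ModuleCat.hom_ext h₀.linearMap_comp_eq_zero⟩
  quasiIso := ⟨fun j => by
    cases j with
    | zero =>
      rw [ChainComplex.quasiIsoAt₀_iff, ShortComplex.quasiIso_iff_of_zeros' _ rfl rfl rfl]
      constructor
      · rw [ShortComplex.ShortExact.moduleCat_exact_iff_function_exact]
        exact h₀
      · exact (ModuleCat.epi_iff_surjective _).2 hπ
    | succ j =>
      rw [quasiIsoAt_iff_exactAt' (hL := ChainComplex.exactAt_succ_single_obj ..),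
        HomologicalComplex.exactAt_iff' _ (j + 1 + 1) (j + 1) j (by simp) (by simp),
        ShortComplex.ShortExact.moduleCat_exact_iff_function_exact]
      simp only [HomologicalComplex.sc', HomologicalComplex.shortComplexFunctor', ChainComplex.of_d]
      exact hδ j⟩

theorem projectiveResolutionOfExact_d (j : ℕ) :
    (projectiveResolutionOfExact δ π hπ h₀ hδ).complex.d (j + 1) j = ModuleCat.ofHom (δ j) :=
  ChainComplex.of_d (fun j => ModuleCat.of R (F j)) (fun j => ModuleCat.ofHom (δ j)) j

end ModuleCat

namespace IsLocalRing

variable {R : Type u} [CommRing R] [IsLocalRing R]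

/-- A generating family of minimal length has all its relations in `𝔪 • ⊤`. -/
theorem exists_surjective_ker_le_maximalIdeal_smul_s4 (A : Type*) [AddCommGroup A] [Module R A]
    [Module.Finite R A] :
    ∃ π : Σ b, (Fin b → R) →ₗ[R] A,
      Function.Surjective π.2 ∧ LinearMap.ker π.2 ≤ maximalIdeal R • ⊤ := by
  classical
  have hA : ∃ b, ∃ s : Fin b → A, Submodule.span R (Set.range s) = ⊤ := Module.Finite.exists_fin
  obtain ⟨s, hs⟩ := Nat.find_spec hA
  have hmin : ∀ b < Nat.find hA, ¬ ∃ s : Fin b → A, Submodule.span R (Set.range s) = ⊤ :=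
    fun b hb => Nat.find_min hA hb
  generalize Nat.find hA = b at s hs hmin
  refine ⟨⟨b, Fintype.linearCombination R s⟩, ?_, fun v hv => ?_⟩
  · rw [← LinearMap.range_eq_top, Fintype.range_linearCombination, hs]
  by_contra hvm
  obtain ⟨c, hc⟩ : ∃ c, IsUnit (v c) := by
    contrapose! hvm
    exact Submodule.mem_ideal_smul_top_of_forall_mem fun c => (mem_maximalIdeal _).2 (hvm c)
  obtain _ | b := b
  · exact c.elim0
  refine hmin b b.lt_succ_self ⟨s ∘ c.succAbove, eq_top_iff.2 (hs ▸ Submodule.span_le.2 ?_)⟩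
  rw [Set.range_comp, Fin.range_succAbove]
  rintro _ ⟨j, rfl⟩
  by_cases hj : j = c
  · subst hj
    rw [LinearMap.mem_ker, Fintype.linearCombination_apply] at hv
    exact Submodule.mem_span_image_compl_of_sum_smul_eq_zero hv hc
  · exact Submodule.subset_span ⟨j, hj, rfl⟩

noncomputable def minimalCover (A : Type*) [AddCommGroup A] [Module R A] [Module.Finite R A] :
    Σ b, (Fin b → R) →ₗ[R] A :=
  (exists_surjective_ker_le_maximalIdeal_smul_s4 A).choose

theorem minimalCover_surjective (A : Type*) [AddCommGroup A] [Module R A] [Module.Finite R A] :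
    Function.Surjective (minimalCover (R := R) A).2 :=
  (exists_surjective_ker_le_maximalIdeal_smul_s4 A).choose_spec.1

theorem ker_minimalCover_le (A : Type*) [AddCommGroup A] [Module R A] [Module.Finite R A] :
    LinearMap.ker (minimalCover (R := R) A).2 ≤ maximalIdeal R • ⊤ :=
  (exists_surjective_ker_le_maximalIdeal_smul_s4 A).choose_spec.2

variable [IsNoetherianRing R]

-- `syzygy R N j = ⟨b, K⟩` records the `j`-th syzygy `K` of `N` as a submodule of `R^b`, the
-- `j`-th module of the minimal free resolution.
variable (R) in
noncomputable def syzygy (N : Type*) [AddCommGroup N] [Module R N] [Module.Finite R N] :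
    ℕ → Σ b, Submodule R (Fin b → R)
  | 0 => ⟨_, LinearMap.ker (minimalCover N).2⟩
  | j + 1 => ⟨_, LinearMap.ker (minimalCover (syzygy N j).2).2⟩

variable (R) in
noncomputable def syzygyCover (N : Type*) [AddCommGroup N] [Module R N] [Module.Finite R N]
    (j : ℕ) : (Fin (syzygy R N (j + 1)).1 → R) →ₗ[R] (Fin (syzygy R N j).1 → R) :=
  (syzygy R N j).2.subtype ∘ₗ (minimalCover (syzygy R N j).2).2

theorem range_syzygyCover (N : Type*) [AddCommGroup N] [Module R N] [Module.Finite R N]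
    (j : ℕ) : LinearMap.range (syzygyCover R N j) = (syzygy R N j).2 :=
  (LinearMap.range_comp_of_range_eq_top _
    (LinearMap.range_eq_top.2 (minimalCover_surjective _))).trans (Submodule.range_subtype _)

theorem ker_syzygyCover (N : Type*) [AddCommGroup N] [Module R N] [Module.Finite R N]
    (j : ℕ) : LinearMap.ker (syzygyCover R N j) = (syzygy R N (j + 1)).2 :=
  LinearMap.ker_comp_of_ker_eq_bot _ (Submodule.ker_subtype _)

theorem syzygy_le_maximalIdeal_smul (N : Type*) [AddCommGroup N] [Module R N] [Module.Finite R N]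
    (j : ℕ) : (syzygy R N j).2 ≤ maximalIdeal R • ⊤ := by
  cases j <;> exact ker_minimalCover_le _

variable (R) in
noncomputable def minimalResolution (N : Type u) [AddCommGroup N] [Module R N]
    [Module.Finite R N] : ProjectiveResolution (ModuleCat.of R N) :=
  ModuleCat.projectiveResolutionOfExact (F := fun j => Fin (syzygy R N j).1 → R)
    (syzygyCover R N) (minimalCover N).2 (minimalCover_surjective N)
    (LinearMap.exact_iff.2 (range_syzygyCover N 0).symm)
    fun j => LinearMap.exact_iff.2 ((ker_syzygyCover N j).trans (range_syzygyCover N (j + 1)).symm)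

variable (N : Type u) [AddCommGroup N] [Module R N] [Module.Finite R N]

instance (j : ℕ) : Module.Free R ((minimalResolution R N).complex.X j) :=
  inferInstanceAs (Module.Free R (Fin _ → R))

instance (j : ℕ) : Module.Finite R ((minimalResolution R N).complex.X j) :=
  inferInstanceAs (Module.Finite R (Fin _ → R))

theorem minimalResolution_d (j : ℕ) :
    ((minimalResolution R N).complex.d (j + 1) j).hom = syzygyCover R N j :=
  congrArg ModuleCat.Hom.hom (ModuleCat.projectiveResolutionOfExact_d _ _ _ _ _ j)

theorem range_minimalResolution_d_le (i j : ℕ) :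
    LinearMap.range ((minimalResolution R N).complex.d i j).hom ≤ maximalIdeal R • ⊤ := by
  by_cases hij : i = j + 1
  · subst hij
    rw [minimalResolution_d]
    exact (range_syzygyCover N j).trans_le (syzygy_le_maximalIdeal_smul N j)
  · rw [HomologicalComplex.shape _ _ _ (by simp; omega)]
    simp

end IsLocalRing

theorem CategoryTheory.ProjectiveResolution.subsingleton_ext_iff_exact {R : Type u} [CommRing R]
    {X : ModuleCat.{u} R} (P : ProjectiveResolution X) (n : ℕ) (Y : ModuleCat.{u} R) :
    Subsingleton (((Ext R (ModuleCat.{u} R) n).obj (Opposite.op X)).obj Y) ↔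
      Function.Exact (LinearMap.lcomp R Y (P.complex.d n (n - 1)).hom)
        (LinearMap.lcomp R Y (P.complex.d (n + 1) n).hom) := by
  rw [← ModuleCat.isZero_iff_subsingleton, (P.isoExt n Y).isZero_iff,
    ← HomologicalComplex.exactAt_iff_isZero_homology,
    HomologicalComplex.exactAt_iff' _ (n - 1) n (n + 1) (by cases n <;> simp) (by simp),
    ShortComplex.ShortExact.moduleCat_exact_iff_function_exact]
  refine Function.Exact.iff_of_ladder_linearEquiv (e₁ := ModuleCat.homLinearEquiv.symm)
    (e₂ := ModuleCat.homLinearEquiv.symm) (e₃ := ModuleCat.homLinearEquiv.symm) ?_ ?_ <;> rfl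

section Nakayama

variable {R S M : Type*} [CommRing R] [CommRing S] [Algebra R S] [AddCommGroup M] [Module R M]
  [Module S M] [IsScalarTower R S M]

variable (R) in
def homsInto (F : Type*) [AddCommGroup F] [Module R F] (W : Submodule S M) :
    Submodule S (F →ₗ[R] M) where
  carrier := {φ | ∀ x, φ x ∈ W}
  add_mem' hφ hψ x := W.add_mem (hφ x) (hψ x)
  zero_mem' _ := W.zero_mem
  smul_mem' s _ hφ x := W.smul_mem s (hφ x)

variable {F F' F'' : Type*} [AddCommGroup F] [Module R F] [AddCommGroup F'] [Module R F']
  [AddCommGroup F''] [Module R F'']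

theorem homsInto_mono {V W : Submodule S M} (h : V ≤ W) : homsInto R F V ≤ homsInto R F W :=
  fun _ hφ x => h (hφ x)

theorem homsInto_le_smul [Module.Free R F] [Module.Finite R F] {J : Ideal S}
    {V W : Submodule S M} (h : V ≤ J • W) : homsInto R F V ≤ J • homsInto R F W := by
  classical
  let b := Module.Free.chooseBasis R F
  let single (c) : M →ₗ[S] F →ₗ[R] M :=
    (b.constr S).toLinearMap ∘ₗ LinearMap.single S (fun _ => M) c
  have single_mem (c) : W.map (single c) ≤ homsInto R F W := by
    rintro _ ⟨m, hm, rfl⟩ x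
    simpa [single, Module.Basis.constr_apply, Pi.single_apply] using
      W.smul_of_tower_mem (b.repr x c) hm
  intro φ hφ
  rw [← b.constr_self S φ, ← Finset.univ_sum_single (fun c => φ (b c)), map_sum]
  refine Submodule.sum_mem _ fun c _ => ?_
  have := Submodule.mem_map_of_mem (f := single c) (h (hφ (b c)))
  rw [Submodule.map_smul''] at this
  exact smul_mono_right _ (single_mem c) this

variable (d : F →ₗ[R] F') (e : F'' →ₗ[R] F)

theorem exists_mem_homsInto_comp_eq {V : Submodule S M}
    (hV : Function.Exact (LinearMap.lcomp R V d) (LinearMap.lcomp R V e))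
    {α : F →ₗ[R] M} (hα : α ∈ homsInto R F V) (hαe : α ∘ₗ e = 0) :
    ∃ β ∈ homsInto R F' V, β ∘ₗ d = α := by
  obtain ⟨β, hβ⟩ := (hV (LinearMap.codRestrict (V.restrictScalars R) α hα)).1 <| by
    ext x
    exact congr($hαe x)
  exact ⟨V.subtype.restrictScalars R ∘ₗ β, fun x => (β x).2, by ext x; exact congr(($hβ x : M))⟩

variable [IsNoetherianRing S] [Module.Finite S M] [Module.Free R F'] [Module.Finite R F']
  {I : Ideal R} {V W : Submodule S M}
  (hIW : I • W.restrictScalars R ≤ V.restrictScalars R) (hVW : V ≤ (⊥ : Ideal S).jacobson • W)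
  (hde : d ∘ₗ e = 0) (hd : LinearMap.range d ≤ I • ⊤)
  (hV : Function.Exact (LinearMap.lcomp R V d) (LinearMap.lcomp R V e))
include hIW hVW hde hd hV

theorem map_lcomp_homsInto_eq_bot : (homsInto R F' W).map (LinearMap.lcomp S M d) = ⊥ := by
  refine Submodule.eq_bot_of_le_smul_of_le_jacobson_bot _ _
    ((IsNoetherian.noetherian _).map _) ?_ le_rfl
  rintro _ ⟨φ, hφ, rfl⟩
  have hφd : φ ∘ₗ d ∈ homsInto R F V := fun x => by
    refine hIW ?_
    have := Submodule.mem_map_of_mem (f := φ) (hd ⟨x, rfl⟩)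
    rw [Submodule.map_smul''] at this
    have hφW : Submodule.map φ ⊤ ≤ W.restrictScalars R := by rintro _ ⟨y, -, rfl⟩; exact hφ y
    exact smul_mono_right I hφW this
  obtain ⟨ε, hε, hεd⟩ := exists_mem_homsInto_comp_eq d e hV hφd (by
    rw [LinearMap.comp_assoc, hde, LinearMap.comp_zero])
  rw [← Submodule.map_smul'']
  exact ⟨ε, homsInto_le_smul hVW hε, hεd⟩

theorem exact_lcomp_of_exact_lcomp {r : R} (hr : r ∈ I) (hreg : ∀ x : M, r • x = 0 → x = 0) :
    Function.Exact (LinearMap.lcomp R W d) (LinearMap.lcomp R W e) := by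
  have cocycle_eq_zero (α : F →ₗ[R] W) (hα : α ∘ₗ e = 0) : α = 0 := by
    let ι := W.subtype.restrictScalars R
    have hrα : r • (ι ∘ₗ α) ∈ homsInto R F V := fun x =>
      hIW (Submodule.smul_mem_smul hr (α x).2)
    obtain ⟨β, hβ, hβd⟩ := exists_mem_homsInto_comp_eq d e hV hrα (by
      rw [LinearMap.smul_comp, LinearMap.comp_assoc, hα, LinearMap.comp_zero, smul_zero])
    have hmem : r • (ι ∘ₗ α) ∈ (homsInto R F' W).map (LinearMap.lcomp S M d) :=
      ⟨β, homsInto_mono (hVW.trans Submodule.smul_le_right) hβ, hβd⟩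
    rw [map_lcomp_homsInto_eq_bot d e hIW hVW hde hd hV, Submodule.mem_bot] at hmem
    ext x
    exact hreg _ congr($hmem x)
  refine fun α => ⟨fun hα => ⟨0, ?_⟩, ?_⟩
  · rw [map_zero, cocycle_eq_zero α hα]
  · rintro ⟨β, rfl⟩
    rw [LinearMap.lcomp_apply', LinearMap.lcomp_apply', LinearMap.comp_assoc, hde,
      LinearMap.comp_zero]

end Nakayama

theorem ext_vanishing_along_filtration_general
    (R : Type) [CommRing R] [IsNoetherianRing R] [IsLocalRing R]
    (S : Type) [CommRing S] [IsNoetherianRing S] [Algebra R S]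
    (M : Type) [AddCommGroup M] [Module R M] [Module S M] [IsScalarTower R S M]
    [Module.Finite S M]
    (t : ℕ)
    (Mfil : ℕ → Submodule S M)
    (hlow : ∀ i, 1 ≤ i → i ≤ t →
      maximalIdeal R • (Mfil (i - 1)).restrictScalars R ≤ (Mfil i).restrictScalars R)
    (hhigh : ∀ i, 1 ≤ i → i ≤ t → Mfil i ≤ (⊥ : Ideal S).jacobson • Mfil (i - 1))
    (hreg : ∃ r ∈ maximalIdeal R, ∀ x : M, r • x = 0 → x = 0)
    (N : Type) [AddCommGroup N] [Module R N] [Module.Finite R N]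
    (n : ℕ) (i : ℕ) (hi1 : 1 ≤ i) (hit : i ≤ t)
    (hvanish : Subsingleton
      (((Ext R (ModuleCat.{0} R) n).obj (Opposite.op (ModuleCat.of R N))).obj
        (ModuleCat.of R ↥(Mfil i)))) :
    Subsingleton
      (((Ext R (ModuleCat.{0} R) n).obj (Opposite.op (ModuleCat.of R N))).obj
        (ModuleCat.of R ↥(Mfil (i - 1)))) := by
  obtain ⟨r, hr, hreg⟩ := hreg
  let P := minimalResolution R N
  rw [P.subsingleton_ext_iff_exact] at hvanish ⊢
  exact exact_lcomp_of_exact_lcomp _ _ (hlow i hi1 hit) (hhigh i hi1 hit)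
    (congrArg ModuleCat.Hom.hom (P.complex.d_comp_d (n + 1) n (n - 1)))
    (range_minimalResolution_d_le N n (n - 1)) hvanish hr hreg

theorem ext_vanishing_along_filtration
    (R : Type) [CommRing R] [IsNoetherianRing R] [IsLocalRing R]
    (S : Type) [CommRing S] [IsNoetherianRing S] [Algebra R S]
    (hmS : (maximalIdeal R).map (algebraMap R S) ≤ (⊥ : Ideal S).jacobson)
    (M : Type) [AddCommGroup M] [Module R M] [Module S M] [IsScalarTower R S M]
    [Nontrivial M] [Module.Finite S M]
    (t : ℕ) (ht : 1 ≤ t)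
    (Mfil : ℕ → Submodule S M)
    (hM0 : Mfil 0 = ⊤)
    (hlow : ∀ i, 1 ≤ i → i ≤ t →
      maximalIdeal R • (Mfil (i - 1)).restrictScalars R ≤ (Mfil i).restrictScalars R)
    (hhigh : ∀ i, 1 ≤ i → i ≤ t → Mfil i ≤ (⊥ : Ideal S).jacobson • Mfil (i - 1))
    (hreg : ∃ r ∈ maximalIdeal R, ∀ x : M, r • x = 0 → x = 0)
    (N : Type) [AddCommGroup N] [Module R N] [Module.Finite R N]
    (n : ℕ) (i : ℕ) (hi1 : 1 ≤ i) (hit : i ≤ t)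
    (hvanish : Subsingleton
      (((Ext R (ModuleCat.{0} R) n).obj (Opposite.op (ModuleCat.of R N))).obj
        (ModuleCat.of R ↥(Mfil i)))) :
    Subsingleton
      (((Ext R (ModuleCat.{0} R) n).obj (Opposite.op (ModuleCat.of R N))).obj
        (ModuleCat.of R ↥(Mfil (i - 1)))) :=
  ext_vanishing_along_filtration_general R S M t Mfil hlow hhigh hreg N n i hi1 hit hvanish
end

section
/- Assume the filtration setup and let F_• be a minimal complex of finitely generated free R-modules with differentials f_n : F_n → F_{n−1}. If H_n(M_i ⊗_R F_•) = 0 for some integer n and some 1 ≤ i ≤ t, then the induced map id_{M_{i-1}} ⊗ f_{n+1} : M_{i-1} ⊗_R F_{n+1} → M_{i-1} ⊗_R F_n is the zero map; if moreover some element of m is a non-zero-divisor on M, then H_n(M_{i-1} ⊗_R F_•) = 0. -/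
/-!
Write `A = M_i`, `B = M_{i-1}`, `d = f_{n+1}`, and `ι : A → B` for the inclusion. Since `F_{n+1}`
is projective and `F_•` is minimal, `d` lifts through the multiplication map `𝔪 ⊗ F_n → F_n`.
Contracting along `B ⊗ 𝔪 → A`, `b ⊗ a ↦ a • b`, then writes `B ⊗ d = (ι ⊗ F_n) ∘ D` with
`D : B ⊗ F_{n+1} → A ⊗ F_n` landing in the cycles of `A ⊗ F_•` (this uses flatness of `F_{n-1}`).
As `H_n(A ⊗ F_•) = 0` these cycles are boundaries, so `B ⊗ d` has the same image as its
restriction to the image of `A ⊗ F_{n+1}`, which lies in `Jac(S) • (B ⊗ F_{n+1})` because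
`A ≤ Jac(S) • B`. Nakayama's lemma over `S` kills the image.

For the second claim let `r ∈ 𝔪` be regular on `M`. If `z` is a cycle of `B ⊗ F_•` in degree `n`,
then `r z`, viewed in `A ⊗ F_n`, is a cycle, hence a boundary, so `r z` is a boundary of
`B ⊗ F_•`, whose differential out of degree `n + 1` is now zero. As `F_n` is flat, `r` is
regular on `B ⊗ F_n`, so `z = 0`.
-/

universe u

open TensorProduct LinearMap

theorem Module.Finite.tensorProduct_of_isScalarTower {R S N F : Type*} [CommRing R] [CommRing S]
    [Algebra R S] [AddCommGroup N] [Module R N] [Module S N] [IsScalarTower R S N]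
    [Module.Finite S N] [AddCommGroup F] [Module R F] [Module.Finite R F] :
    Module.Finite S (N ⊗[R] F) := by
  obtain ⟨k, π, hπ⟩ := Module.Finite.exists_fin' R F
  have : Module.Finite S (N ⊗[R] (Fin k → R)) := .equiv (piScalarRight R S N (Fin k)).symm
  exact .of_surjective (AlgebraTensorModule.lTensor S N π) (LinearMap.lTensor_surjective N hπ)

namespace Ideal

variable {R : Type*} [CommRing R] (I : Ideal R) {F₁ F₂ F₃ : Type*}
  [AddCommGroup F₁] [AddCommGroup F₂] [AddCommGroup F₃] [Module R F₁] [Module R F₂] [Module R F₃]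

theorem lift_lsmul_comp_subtype_injective [Module.Flat R F₃] :
    Function.Injective (lift ((lsmul R F₃).comp I.subtype)) := by
  rw [← lid_comp_rTensor]
  exact (TensorProduct.lid R F₃).injective.comp
    (Module.Flat.rTensor_preserves_injective_linearMap _ I.injective_subtype)

theorem range_lift_lsmul_comp_subtype :
    range (lift ((lsmul R F₂).comp I.subtype)) = I • ⊤ := by
  apply le_antisymm
  · rintro _ ⟨w, rfl⟩
    induction w using TensorProduct.induction_on with
    | zero => simp
    | tmul a x => exact Submodule.smul_mem_smul a.2 trivial
    | add w₁ w₂ h₁ h₂ => rw [map_add]; exact add_mem h₁ h₂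
  · exact Submodule.smul_le.2 fun r hr x _ => ⟨⟨r, hr⟩ ⊗ₜ x, rfl⟩

theorem exists_lift_lsmul_comp_subtype_comp_eq [Module.Projective R F₁] {f : F₁ →ₗ[R] F₂}
    (hf : range f ≤ I • ⊤) :
    ∃ φ : F₁ →ₗ[R] I ⊗[R] F₂, lift ((lsmul R F₂).comp I.subtype) ∘ₗ φ = f := by
  set μ := lift ((lsmul R F₂).comp I.subtype)
  have hfμ : ∀ x, f x ∈ range μ := fun x ↦
    (I.range_lift_lsmul_comp_subtype).ge (hf (mem_range_self f x))
  obtain ⟨φ, hφ⟩ := Module.projective_lifting_property μ.rangeRestrict (f.codRestrict _ hfμ)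
    μ.surjective_rangeRestrict
  exact ⟨φ, congr(((range μ).subtype).comp $hφ)⟩

theorem lTensor_comp_eq_zero_of_lift [Module.Flat R F₃] {f : F₁ →ₗ[R] F₂} {g : F₂ →ₗ[R] F₃}
    (hgf : g ∘ₗ f = 0) {φ : F₁ →ₗ[R] I ⊗[R] F₂}
    (hφ : lift ((lsmul R F₂).comp I.subtype) ∘ₗ φ = f) :
    lTensor I g ∘ₗ φ = 0 := by
  have hμ : lift ((lsmul R F₃).comp I.subtype) ∘ₗ lTensor I g =
      g ∘ₗ lift ((lsmul R F₂).comp I.subtype) := by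
    ext; simp
  ext x
  apply I.lift_lsmul_comp_subtype_injective
  rw [comp_apply, LinearMap.zero_apply, map_zero]
  calc lift ((lsmul R F₃).comp I.subtype) (lTensor I g (φ x))
      = g (lift ((lsmul R F₂).comp I.subtype) (φ x)) := congr($hμ (φ x))
    _ = g (f x) := congr(g ($hφ x))
    _ = 0 := congr($hgf x)

end Ideal

namespace Submodule

variable {R S M : Type*} [CommRing R] [CommRing S] [Algebra R S]
  [AddCommGroup M] [Module R M] [Module S M] [IsScalarTower R S M]
  {I : Ideal R} {J : Ideal S} {A B : Submodule S M}

def contractIdeal (h : I • B.restrictScalars R ≤ A.restrictScalars R) : B ⊗[R] I →ₗ[R] A :=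
  lift <| LinearMap.mk₂ R (fun b a ↦ ⟨(a : R) • (b : M), h (smul_mem_smul a.2 b.2)⟩)
    (fun _ _ _ ↦ Subtype.ext (smul_add _ _ _))
    (fun _ _ _ ↦ Subtype.ext (smul_comm _ _ _))
    (fun _ _ _ ↦ Subtype.ext (add_smul _ _ _))
    (fun _ _ _ ↦ Subtype.ext (mul_smul _ _ _))

theorem lTensor_lift_lsmul_comp_subtype (hAB : A ≤ B)
    (h : I • B.restrictScalars R ≤ A.restrictScalars R) (F : Type*) [AddCommGroup F]
    [Module R F] :
    (lift ((lsmul R F).comp I.subtype)).lTensor B =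
      rTensor F ((inclusion hAB).restrictScalars R ∘ₗ contractIdeal h) ∘ₗ
        (TensorProduct.assoc R B I F).symm := by
  ext b a x
  simp [contractIdeal]
  rfl

theorem rTensor_inclusion_mem_smul_top (hA : A ≤ J • B) {F : Type*} [AddCommGroup F]
    [Module R F] (w : A ⊗[R] F) :
    rTensor F ((inclusion (hA.trans smul_le_right)).restrictScalars R) w ∈
      J • (⊤ : Submodule S (B ⊗[R] F)) := by
  induction w using TensorProduct.induction_on with
  | zero => simp
  | tmul a x =>
    have ha : inclusion (hA.trans smul_le_right) a ∈ J • (⊤ : Submodule S B) :=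
      (mem_smul_top_iff _ _ _).2 (hA a.2)
    have := mem_map_of_mem (f := (AlgebraTensorModule.mk R S B F).flip x) ha
    rw [map_smul'', map_top] at this
    exact (smul_mono_right J le_top : J • range _ ≤ J • ⊤) this
  | add w₁ w₂ h₁ h₂ => rw [map_add]; exact add_mem h₁ h₂

theorem lTensor_eq_zero_of_range_le_range_comp_rTensor (hJ : J ≤ (⊥ : Ideal S).jacobson)
    (hA : A ≤ J • B) [Module.Finite S B] {F₁ F₂ : Type*} [AddCommGroup F₁] [AddCommGroup F₂]
    [Module R F₁] [Module R F₂] [Module.Finite R F₁] (f : F₁ →ₗ[R] F₂)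
    (h : range (f.lTensor B) ≤
      range (f.lTensor B ∘ₗ rTensor F₁ ((inclusion (hA.trans smul_le_right)).restrictScalars R))) :
    f.lTensor B = 0 := by
  have := Module.Finite.tensorProduct_of_isScalarTower (R := R) (S := S) (N := B) (F := F₁)
  let d := AlgebraTensorModule.lTensor S B f
  have hd : range d ≤ J • range d := by
    rintro _ ⟨z, rfl⟩
    obtain ⟨w, hw⟩ := h ⟨z, rfl⟩
    rw [← map_top, ← map_smul'']
    exact ⟨_, rTensor_inclusion_mem_smul_top hA w, hw⟩
  have hfg : (range d).FG := by rw [← map_top]; exact Module.Finite.fg_top.map d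
  have hbot := eq_bot_of_le_smul_of_le_jacobson_bot J _ hfg hd hJ
  exact LinearMap.ext fun z ↦ congr($(range_eq_bot.1 hbot) z)

theorem lTensor_eq_zero_of_exact (hJ : J ≤ (⊥ : Ideal S).jacobson) (hA : A ≤ J • B)
    (hIBA : I • B.restrictScalars R ≤ A.restrictScalars R) [Module.Finite S B]
    {F₁ F₂ F₃ : Type*} [AddCommGroup F₁] [AddCommGroup F₂] [AddCommGroup F₃]
    [Module R F₁] [Module R F₂] [Module R F₃]
    [Module.Projective R F₁] [Module.Finite R F₁] [Module.Flat R F₃]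
    {f : F₁ →ₗ[R] F₂} {g : F₂ →ₗ[R] F₃} (hf : range f ≤ I • ⊤) (hgf : g ∘ₗ f = 0)
    (hexact : Function.Exact (f.lTensor A) (g.lTensor A)) :
    f.lTensor B = 0 := by
  obtain ⟨φ, hφ⟩ := I.exists_lift_lsmul_comp_subtype_comp_eq hf
  have hAB : A ≤ B := hA.trans smul_le_right
  set ι := (inclusion hAB).restrictScalars R
  -- `D (b ⊗ x) = Σ (aⱼ • b) ⊗ yⱼ` when `φ x = Σ aⱼ ⊗ yⱼ`
  set D := rTensor F₂ (contractIdeal hIBA) ∘ₗ (TensorProduct.assoc R B I F₂).symm ∘ₗ φ.lTensor B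
  have hD : rTensor F₂ ι ∘ₗ D = f.lTensor B := by
    rw [← hφ, lTensor_comp, lTensor_lift_lsmul_comp_subtype hAB hIBA, rTensor_comp]
    rfl
  have hassoc : g.lTensor (B ⊗[R] I) ∘ₗ (TensorProduct.assoc R B I F₂).symm =
      (TensorProduct.assoc R B I F₃).symm ∘ₗ (g.lTensor I).lTensor B := by
    ext; rfl
  have hgD : g.lTensor A ∘ₗ D = 0 := by
    calc g.lTensor A ∘ₗ D
        = rTensor F₃ (contractIdeal hIBA) ∘ₗ
            (g.lTensor (B ⊗[R] I) ∘ₗ (TensorProduct.assoc R B I F₂).symm) ∘ₗ φ.lTensor B := by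
          simp only [D, ← comp_assoc, lTensor_comp_rTensor, rTensor_comp_lTensor]
      _ = rTensor F₃ (contractIdeal hIBA) ∘ₗ (TensorProduct.assoc R B I F₃).symm ∘ₗ
            (g.lTensor I ∘ₗ φ).lTensor B := by
          rw [hassoc, lTensor_comp, comp_assoc]
      _ = 0 := by rw [I.lTensor_comp_eq_zero_of_lift hgf hφ, lTensor_zero, comp_zero, comp_zero]
  refine lTensor_eq_zero_of_range_le_range_comp_rTensor hJ hA f ?_
  rintro _ ⟨z, rfl⟩
  obtain ⟨w, hw⟩ := (hexact (D z)).1 congr($hgD z)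
  refine ⟨w, ?_⟩
  calc f.lTensor B (rTensor F₁ ι w) = rTensor F₂ ι (f.lTensor A w) := by
        simp only [← comp_apply, lTensor_comp_rTensor, rTensor_comp_lTensor]
    _ = f.lTensor B z := by rw [hw, ← hD]; rfl

end Submodule

theorem Submodule.lTensor_injective_of_exact {R M : Type*} [CommRing R] [AddCommGroup M]
    [Module R M] {A B : Submodule R M} (hAB : A ≤ B) {r : R} (hr : IsSMulRegular B r)
    (hrBA : ∀ b ∈ B, r • b ∈ A) {F₁ F₂ F₃ : Type*} [AddCommGroup F₁] [AddCommGroup F₂]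
    [AddCommGroup F₃] [Module R F₁] [Module R F₂] [Module R F₃] [Module.Flat R F₂]
    {f : F₁ →ₗ[R] F₂} {g : F₂ →ₗ[R] F₃} (hexact : Function.Exact (f.lTensor A) (g.lTensor A))
    (hBf : f.lTensor B = 0) :
    Function.Injective (g.lTensor B) := by
  let μ : B →ₗ[R] A := (r • B.subtype).codRestrict A fun b ↦ hrBA b b.2
  have hμ : inclusion hAB ∘ₗ μ = r • LinearMap.id := rfl
  refine (injective_iff_map_eq_zero _).2 fun z hz ↦ (hr.rTensor F₂).right_eq_zero_of_smul ?_
  obtain ⟨w, hw⟩ := (hexact (rTensor F₂ μ z)).1 <| by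
    rw [← comp_apply, lTensor_comp_rTensor, ← rTensor_comp_lTensor, comp_apply, hz, map_zero]
  calc r • z = rTensor F₂ (inclusion hAB ∘ₗ μ) z := by
        rw [hμ, rTensor_smul, rTensor_id]; rfl
    _ = f.lTensor B (rTensor F₁ (inclusion hAB) w) := by
        rw [rTensor_comp, comp_apply, ← hw, ← comp_apply, rTensor_comp_lTensor,
          ← lTensor_comp_rTensor, comp_apply]
    _ = 0 := by rw [hBf, LinearMap.zero_apply]

open CategoryTheory CategoryTheory.Limits CategoryTheory.MonoidalCategory IsLocalRing

theorem ChainComplex.isZero_homology_tensorLeft_iff {R : Type u} [CommRing R]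
    (N : ModuleCat.{u} R) (F : ChainComplex (ModuleCat.{u} R) ℤ) (n : ℤ) :
    IsZero ((((tensorLeft N).mapHomologicalComplex (ComplexShape.down ℤ)).obj F).homology n) ↔
      Function.Exact ((F.d (n + 1) n).hom.lTensor N) ((F.d n (n - 1)).hom.lTensor N) := by
  rw [← HomologicalComplex.exactAt_iff_isZero_homology,
    HomologicalComplex.exactAt_iff' _ (n + 1) n (n - 1) (by simp) (by simp),
    ShortComplex.ShortExact.moduleCat_exact_iff_function_exact]
  rfl

theorem tensor_differential_zero_of_homology_vanishing_general
    (R : Type) [CommRing R] [IsLocalRing R]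
    (S : Type) [CommRing S] [IsNoetherianRing S] [Algebra R S]
    (M : Type) [AddCommGroup M] [Module R M] [Module S M] [IsScalarTower R S M]
    [Module.Finite S M]
    (t : ℕ)
    (Mfil : ℕ → Submodule S M)
    (hlow : ∀ i, 1 ≤ i → i ≤ t →
      maximalIdeal R • (Mfil (i - 1)).restrictScalars R ≤ (Mfil i).restrictScalars R)
    (hhigh : ∀ i, 1 ≤ i → i ≤ t → Mfil i ≤ (⊥ : Ideal S).jacobson • Mfil (i - 1))
    (F : ChainComplex (ModuleCat.{0} R) ℤ)
    (hfree : ∀ n : ℤ, Module.Free R (F.X n))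
    (hfg : ∀ n : ℤ, Module.Finite R (F.X n))
    (hmin : ∀ n : ℤ, LinearMap.range (F.d n (n - 1)).hom ≤
      maximalIdeal R • (⊤ : Submodule R (F.X (n - 1))))
    (n : ℤ) (i : ℕ) (hi1 : 1 ≤ i) (hit : i ≤ t)
    (hvanish : IsZero
      ((((tensorLeft (ModuleCat.of R ↥(Mfil i))).mapHomologicalComplex
          (ComplexShape.down ℤ)).obj F).homology n)) :
    (tensorLeft (ModuleCat.of R ↥(Mfil (i - 1)))).map (F.d (n + 1) n) = 0 ∧
      ((∃ r ∈ maximalIdeal R, ∀ x : M, r • x = 0 → x = 0) →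
        IsZero
          ((((tensorLeft (ModuleCat.of R ↥(Mfil (i - 1)))).mapHomologicalComplex
              (ComplexShape.down ℤ)).obj F).homology n)) := by
  have hexact := (ChainComplex.isZero_homology_tensorLeft_iff _ F n).1 hvanish
  have hmin' := hmin (n + 1)
  rw [add_sub_cancel_right] at hmin'
  have hdd : (F.d n (n - 1)).hom ∘ₗ (F.d (n + 1) n).hom = 0 := by
    rw [← ModuleCat.hom_comp, F.d_comp_d, ModuleCat.hom_zero]
  have hd_zero : (F.d (n + 1) n).hom.lTensor (Mfil (i - 1)) = 0 :=
    Submodule.lTensor_eq_zero_of_exact le_rfl (hhigh i hi1 hit) (hlow i hi1 hit) hmin' hdd hexact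
  refine ⟨ModuleCat.hom_ext hd_zero, fun ⟨r, hr, hreg⟩ ↦ ?_⟩
  rw [ChainComplex.isZero_homology_tensorLeft_iff]
  change Function.Exact ((F.d (n + 1) n).hom.lTensor (Mfil (i - 1))) _
  rw [hd_zero, exact_zero_iff_injective]
  exact Submodule.lTensor_injective_of_exact
    (A := (Mfil i).restrictScalars R) (B := (Mfil (i - 1)).restrictScalars R)
    ((hhigh i hi1 hit).trans Submodule.smul_le_right)
    ((isSMulRegular_iff_right_eq_zero_of_smul.2 hreg).submodule _ r)
    (fun b hb ↦ hlow i hi1 hit (Submodule.smul_mem_smul hr hb)) hexact hd_zero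

theorem tensor_differential_zero_of_homology_vanishing
    (R : Type) [CommRing R] [IsNoetherianRing R] [IsLocalRing R]
    (S : Type) [CommRing S] [IsNoetherianRing S] [Algebra R S]
    (hmS : (maximalIdeal R).map (algebraMap R S) ≤ (⊥ : Ideal S).jacobson)
    (M : Type) [AddCommGroup M] [Module R M] [Module S M] [IsScalarTower R S M]
    [Nontrivial M] [Module.Finite S M]
    (t : ℕ) (ht : 1 ≤ t)
    (Mfil : ℕ → Submodule S M)
    (hM0 : Mfil 0 = ⊤)
    (hlow : ∀ i, 1 ≤ i → i ≤ t →
      maximalIdeal R • (Mfil (i - 1)).restrictScalars R ≤ (Mfil i).restrictScalars R)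
    (hhigh : ∀ i, 1 ≤ i → i ≤ t → Mfil i ≤ (⊥ : Ideal S).jacobson • Mfil (i - 1))
    (F : ChainComplex (ModuleCat.{0} R) ℤ)
    (hfree : ∀ n : ℤ, Module.Free R (F.X n))
    (hfg : ∀ n : ℤ, Module.Finite R (F.X n))
    (hmin : ∀ n : ℤ, LinearMap.range (F.d n (n - 1)).hom ≤
      maximalIdeal R • (⊤ : Submodule R (F.X (n - 1))))
    (n : ℤ) (i : ℕ) (hi1 : 1 ≤ i) (hit : i ≤ t)
    (hvanish : IsZero
      ((((tensorLeft (ModuleCat.of R ↥(Mfil i))).mapHomologicalComplex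
          (ComplexShape.down ℤ)).obj F).homology n)) :
    (tensorLeft (ModuleCat.of R ↥(Mfil (i - 1)))).map (F.d (n + 1) n) = 0 ∧
      ((∃ r ∈ maximalIdeal R, ∀ x : M, r • x = 0 → x = 0) →
        IsZero
          ((((tensorLeft (ModuleCat.of R ↥(Mfil (i - 1)))).mapHomologicalComplex
              (ComplexShape.down ℤ)).obj F).homology n)) :=
  tensor_differential_zero_of_homology_vanishing_general R S M t Mfil hlow hhigh F hfree hfg hmin n
    i hi1 hit hvanish
end

section
/- Let (R, m) be a Noetherian local ring such that m contains a non-zero-divisor of R, and let M be a nonzero finitely generated R-module admitting a filtration of R-submodules M_t ≤ M_{t-1} ≤ ... ≤ M_1 ≤ M_0 = M with each M_i nonzero and m·M_{i-1} ≤ M_i for all i = 1, ..., t. If M is a faithful R-module (its annihilator in R is zero), then M_i is a faithful R-module for every i = 1, ..., t. -/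
/-!
The filtration gives `m ^ i • M ≤ M_i`. For a non-zero-divisor `s ∈ m`, an `r` killing `M_i`
therefore kills `s ^ i • M`, so `r * s ^ i = 0` by faithfulness of `M`, and `r = 0`.
-/

open IsLocalRing

theorem Submodule.pow_smul_top_le_of_smul_le_succ {R M : Type*} [CommSemiring R]
    [AddCommMonoid M] [Module R M] (I : Ideal R) (F : ℕ → Submodule R M) (t : ℕ)
    (hF0 : F 0 = ⊤) (hstep : ∀ i < t, I • F i ≤ F (i + 1)) :
    ∀ i ≤ t, I ^ i • (⊤ : Submodule R M) ≤ F i := by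
  intro i
  induction i with
  | zero => simp [hF0]
  | succ n ih =>
    intro hn
    calc I ^ (n + 1) • (⊤ : Submodule R M) = I • I ^ n • ⊤ := by rw [pow_succ', mul_smul]
      _ ≤ I • F n := Submodule.smul_mono le_rfl (ih (by omega))
      _ ≤ F (n + 1) := hstep n (by omega)

theorem eq_zero_of_forall_smul_eq_zero_of_nonZeroDivisor_smul_mem {R M : Type*} [CommRing R]
    [AddCommGroup M] [Module R M] (hM : ∀ r : R, (∀ x : M, r • x = 0) → r = 0)
    {N : Submodule R M} {s : R} (hs : s ∈ nonZeroDivisors R) (hsN : ∀ x : M, s • x ∈ N)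
    {r : R} (hr : ∀ x ∈ N, r • x = 0) : r = 0 := by
  refine (mul_right_mem_nonZeroDivisors_eq_zero_iff hs).1 (hM _ fun x => ?_)
  rw [mul_smul]
  exact hr _ (hsN x)

theorem faithful_of_faithful_filtration_general
    (R : Type) [CommRing R] [IsLocalRing R]
    (hnzd : ∃ r ∈ maximalIdeal R, r ∈ nonZeroDivisors R)
    (M : Type) [AddCommGroup M] [Module R M]
    (t : ℕ)
    (Mfil : ℕ → Submodule R M)
    (hM0 : Mfil 0 = ⊤)
    (hlow : ∀ i, 1 ≤ i → i ≤ t → maximalIdeal R • Mfil (i - 1) ≤ Mfil i)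
    (hfaithful : ∀ r : R, (∀ x : M, r • x = 0) → r = 0) :
    ∀ i, 1 ≤ i → i ≤ t → ∀ r : R, (∀ x ∈ Mfil i, r • x = 0) → r = 0 := by
  obtain ⟨s, hsm, hs⟩ := hnzd
  have hpow : ∀ i ≤ t, maximalIdeal R ^ i • (⊤ : Submodule R M) ≤ Mfil i :=
    Submodule.pow_smul_top_le_of_smul_le_succ _ Mfil t hM0 fun i hi => by
      simpa using hlow (i + 1) (by omega) hi
  intro i _ hit r hr
  exact eq_zero_of_forall_smul_eq_zero_of_nonZeroDivisor_smul_mem hfaithful (pow_mem hs i)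
    (fun x => hpow i hit (Submodule.smul_mem_smul (Ideal.pow_mem_pow hsm i) trivial)) hr

theorem faithful_of_faithful_filtration
    (R : Type) [CommRing R] [IsNoetherianRing R] [IsLocalRing R]
    (hnzd : ∃ r ∈ maximalIdeal R, r ∈ nonZeroDivisors R)
    (M : Type) [AddCommGroup M] [Module R M] [Module.Finite R M] [Nontrivial M]
    (t : ℕ) (ht : 1 ≤ t)
    (Mfil : ℕ → Submodule R M)
    (hM0 : Mfil 0 = ⊤)
    (hne : ∀ i ≤ t, Mfil i ≠ ⊥)
    (hmono : ∀ i, 1 ≤ i → i ≤ t → Mfil i ≤ Mfil (i - 1))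
    (hlow : ∀ i, 1 ≤ i → i ≤ t → maximalIdeal R • Mfil (i - 1) ≤ Mfil i)
    (hfaithful : ∀ r : R, (∀ x : M, r • x = 0) → r = 0) :
    ∀ i, 1 ≤ i → i ≤ t → ∀ r : R, (∀ x ∈ Mfil i, r • x = 0) → r = 0 :=
  faithful_of_faithful_filtration_general R hnzd M t Mfil hM0 hlow hfaithful
end

section
/- Let (R, m) be a Noetherian local ring such that m contains a non-zero-divisor of R, and let M be a nonzero finitely generated R-module admitting a filtration of R-submodules M_t ≤ M_{t-1} ≤ ... ≤ M_1 ≤ M_0 = M with each M_i nonzero and m·M_{i-1} ≤ M_i for all i = 1, ..., t. If the localization M_p is a free R_p-module for every associated prime p of R, then the localization (M_i)_p is a free R_p-module for every associated prime p of R and every i = 1, ..., t. -/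
open IsLocalRing

/-! A non-zero-divisor `r ∈ 𝔪` lies outside every associated prime `p` of `R`, and the
filtration condition gives `r ^ i • M ≤ Mᵢ`. So `r ^ i` becomes a unit in `R_p`, which forces
the inclusion `Mᵢ ⊆ M` to become an isomorphism `(Mᵢ)_p ≅ M_p`, and freeness transfers. -/

theorem IsAssociatedPrime.notMem_of_isSMulRegular {R M : Type*} [CommSemiring R]
    [AddCommMonoid M] [Module R M] {p : Ideal R} (hp : IsAssociatedPrime p M) {r : R}
    (hr : IsSMulRegular M r) : r ∉ p := by
  obtain ⟨hprime, x, rfl⟩ := hp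
  intro ⟨n, hn⟩
  have hx : x = 0 := (hr.pow n).right_eq_zero_of_smul (by simpa using hn)
  exact hprime.ne_top (by simp [hx])

theorem Submodule.pow_smul_top_le_of_smul_le {R M : Type*} [CommSemiring R] [AddCommMonoid M]
    [Module R M] {I : Ideal R} {F : ℕ → Submodule R M} {t : ℕ} (h0 : F 0 = ⊤)
    (hstep : ∀ i, 1 ≤ i → i ≤ t → I • F (i - 1) ≤ F i) : ∀ i ≤ t, I ^ i • ⊤ ≤ F i := by
  intro i
  induction i with
  | zero => simp [h0]
  | succ n ih =>
    intro hn
    calc I ^ (n + 1) • ⊤ = I • I ^ n • (⊤ : Submodule R M) := by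
          rw [pow_succ', mul_smul]
      _ ≤ I • F n := smul_mono_right _ (ih (by omega))
      _ ≤ F (n + 1) := hstep (n + 1) (by omega) hn

theorem IsLocalizedModule.comp_subtype_of_smul_mem {R M M' : Type*} [CommSemiring R]
    [AddCommMonoid M] [Module R M] [AddCommMonoid M'] [Module R M'] {S : Submonoid R}
    (f : M →ₗ[R] M') [IsLocalizedModule S f] {N : Submodule R M} {s : R} (hs : s ∈ S)
    (hsN : ∀ x, s • x ∈ N) :
    IsLocalizedModule S (f ∘ₗ N.subtype) where
  map_units := IsLocalizedModule.map_units f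
  surj y := by
    obtain ⟨⟨x, u⟩, hx⟩ := IsLocalizedModule.surj S f y
    refine ⟨⟨⟨s • x, hsN x⟩, ⟨s, hs⟩ * u⟩, ?_⟩
    simp [Submonoid.smul_def, mul_smul, ← hx]
  exists_of_eq h := by
    obtain ⟨c, hc⟩ := IsLocalizedModule.exists_of_eq (S := S) (f := f) h
    exact ⟨c, Subtype.ext hc⟩

theorem locally_free_on_assPrimes_of_filtration_general
    (R : Type) [CommRing R] [IsLocalRing R]
    (hnzd : ∃ r ∈ maximalIdeal R, r ∈ nonZeroDivisors R)
    (M : Type) [AddCommGroup M] [Module R M]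
    (t : ℕ)
    (Mfil : ℕ → Submodule R M)
    (hM0 : Mfil 0 = ⊤)
    (hlow : ∀ i, 1 ≤ i → i ≤ t → maximalIdeal R • Mfil (i - 1) ≤ Mfil i)
    (hfreeloc : ∀ (p : Ideal R) [p.IsPrime], p ∈ associatedPrimes R R →
      Module.Free (Localization p.primeCompl) (LocalizedModule p.primeCompl M)) :
    ∀ i, 1 ≤ i → i ≤ t → ∀ (p : Ideal R) [p.IsPrime], p ∈ associatedPrimes R R →
      Module.Free (Localization p.primeCompl) (LocalizedModule p.primeCompl ↥(Mfil i)) := by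
  obtain ⟨r, hrm, hr⟩ := hnzd
  intro i _ hit p _ hp
  have hrp : r ∈ p.primeCompl :=
    hp.notMem_of_isSMulRegular (isRegular_iff_mem_nonZeroDivisors.mpr hr).left.isSMulRegular
  have hri : ∀ x : M, r ^ i • x ∈ Mfil i := fun x =>
    Submodule.pow_smul_top_le_of_smul_le hM0 hlow i hit
      (Submodule.smul_mem_smul (Ideal.pow_mem_pow hrm i) Submodule.mem_top)
  have hloc := IsLocalizedModule.comp_subtype_of_smul_mem
    (LocalizedModule.mkLinearMap p.primeCompl M) (pow_mem hrp i) hri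
  have hfree := hfreeloc p hp
  exact .of_equiv <| LinearEquiv.symm <| LinearEquiv.extendScalarsOfIsLocalization
    p.primeCompl (Localization p.primeCompl) <| IsLocalizedModule.iso p.primeCompl
      (LocalizedModule.mkLinearMap p.primeCompl M ∘ₗ (Mfil i).subtype)

theorem locally_free_on_assPrimes_of_filtration
    (R : Type) [CommRing R] [IsNoetherianRing R] [IsLocalRing R]
    (hnzd : ∃ r ∈ maximalIdeal R, r ∈ nonZeroDivisors R)
    (M : Type) [AddCommGroup M] [Module R M] [Module.Finite R M] [Nontrivial M]
    (t : ℕ) (ht : 1 ≤ t)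
    (Mfil : ℕ → Submodule R M)
    (hM0 : Mfil 0 = ⊤)
    (hne : ∀ i ≤ t, Mfil i ≠ ⊥)
    (hmono : ∀ i, 1 ≤ i → i ≤ t → Mfil i ≤ Mfil (i - 1))
    (hlow : ∀ i, 1 ≤ i → i ≤ t → maximalIdeal R • Mfil (i - 1) ≤ Mfil i)
    (hfreeloc : ∀ (p : Ideal R) [p.IsPrime], p ∈ associatedPrimes R R →
      Module.Free (Localization p.primeCompl) (LocalizedModule p.primeCompl M)) :
    ∀ i, 1 ≤ i → i ≤ t → ∀ (p : Ideal R) [p.IsPrime], p ∈ associatedPrimes R R →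
      Module.Free (Localization p.primeCompl) (LocalizedModule p.primeCompl ↥(Mfil i)) :=
  locally_free_on_assPrimes_of_filtration_general R hnzd M t Mfil hM0 hlow hfreeloc
end

section
/- Assume the filtration setup, and assume moreover: M is finitely generated as an R-module via f with Supp_R(M) = Spec(R); some element of m is a non-zero-divisor of R; the localization M_p is a free R_p-module for every associated prime p of R; and each M_i is nonzero. If N is a nonzero finitely generated torsionless R-module and M_i ⊗_R N is a torsion-free R-module for some 1 ≤ i ≤ t, then N is a free R-module and M_i is a torsion-free R-module. -/
/-!
Take a minimal presentation `0 → K → Rⁿ → N → 0`, so that `K ⊆ 𝔪 Rⁿ`, and write `A = M_{i-1}`,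
`B = M_i`. For `a ∈ A` and `κ ∈ K` the vector `(κⱼ a)ⱼ` lies in `Bⁿ = B ⊗ Rⁿ`, and its image in
`B ⊗ N` is killed by a non-zero-divisor `r ∈ 𝔪`, because `r (κⱼ a) = κⱼ (r a)` with `r a ∈ B`.
Since `B ⊗ N` is torsion-free, right exactness puts `(κⱼ a)ⱼ` in the image of `B ⊗ K`. So the
`S`-span `D(A)` of all such vectors satisfies `D(A) ⊆ D(B) ⊆ Jac(S) D(A)`, and Nakayama gives
`K A = 0`. As `rⁱ⁻¹ M ⊆ A`, every `κⱼ rⁱ⁻¹` annihilates `M`, which is faithful because its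
localizations at the associated primes of `R` are free and nonzero; hence `K = 0` and `N ≅ Rⁿ`.
Finally `M_i` is a direct summand of `M_i ⊗ N`.
-/

open IsLocalRing TensorProduct

theorem IsLocalRing.exists_surjective_ker_le_maximalIdeal {R N : Type*} [CommRing R]
    [IsLocalRing R] [AddCommGroup N] [Module R N] [Module.Finite R N] :
    ∃ (n : ℕ) (ε : (Fin n → R) →ₗ[R] N), Function.Surjective ε ∧
      LinearMap.ker ε ≤ Submodule.pi Set.univ fun _ ↦ maximalIdeal R := by
  let b := Module.finBasis (ResidueField R) (ResidueField R ⊗[R] N)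
  choose f hf using fun j ↦
    TensorProduct.mk_surjective R N (ResidueField R) Ideal.Quotient.mk_surjective (b j)
  refine ⟨_, Fintype.linearCombination R f, ?_, fun κ hκ j _ ↦ ?_⟩
  · rw [← LinearMap.range_eq_top, Fintype.range_linearCombination]
    exact span_eq_top_of_tmul_eq_basis f b hf
  · have hsum : ∑ j, residue R (κ j) • b j = 0 := by
      have := congrArg (TensorProduct.mk R (ResidueField R) N 1) hκ
      simp only [map_zero, Fintype.linearCombination_apply, map_sum, map_smul, hf] at this
      rw [← this]
      exact Finset.sum_congr rfl fun j _ ↦ algebraMap_smul _ _ _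
    change κ j ∈ maximalIdeal R
    rw [← residue_eq_zero_iff]
    exact Fintype.linearIndependent_iff.mp b.linearIndependent _ hsum j

theorem Submodule.torsion_eq_bot_of_injective {R X Y : Type*} [CommRing R] [AddCommGroup X]
    [Module R X] [AddCommGroup Y] [Module R Y] {f : X →ₗ[R] Y} (hf : Function.Injective f)
    (h : torsion R Y = ⊥) : torsion R X = ⊥ := by
  refine eq_bot_iff.mpr fun x ⟨a, hax⟩ ↦ ?_
  have : f x ∈ torsion R Y :=
    ⟨a, by rw [Submonoid.smul_def, ← map_smul, ← Submonoid.smul_def, hax, map_zero]⟩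
  rw [h, mem_bot, ← map_zero f] at this
  exact (hf this : x = 0) ▸ zero_mem _

theorem Submodule.torsion_eq_bot_of_torsion_tensorProduct_eq_bot {R X N : Type*} [CommRing R]
    [AddCommGroup X] [Module R X] [AddCommGroup N] [Module R N] [Module.Free R N] [Nontrivial N]
    (h : torsion R (X ⊗[R] N) = ⊥) : torsion R X = ⊥ := by
  let b := Module.Free.chooseBasis R N
  obtain ⟨i⟩ := b.index_nonempty
  refine torsion_eq_bot_of_injective (f := (TensorProduct.mk R X N).flip (b i))
    (Function.LeftInverse.injective (g := TensorProduct.rid R X ∘ₗ (b.coord i).lTensor X) ?_) h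
  intro x
  simp

section SMulSpan

variable {R S M ι : Type*} [CommRing R] [CommRing S] [AddCommGroup M] [Module R M] [Module S M]

/-- The image of `P ⊗[R] K` in `ι → M` under `a ⊗ κ ↦ (κ j • a)ⱼ`. -/
def smulSpan (K : Submodule R (ι → R)) (P : Submodule S M) : Submodule S (ι → M) :=
  Submodule.span S {v | ∃ κ ∈ K, ∃ a ∈ P, v = fun j ↦ κ j • a}

theorem smul_mem_smulSpan {K : Submodule R (ι → R)} {P : Submodule S M} {κ : ι → R}
    (hκ : κ ∈ K) {a : M} (ha : a ∈ P) : (fun j ↦ κ j • a) ∈ smulSpan K P :=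
  Submodule.subset_span ⟨κ, hκ, a, ha, rfl⟩

variable [Algebra R S] [IsScalarTower R S M]

theorem smulSpan_le_smul_smulSpan {K : Submodule R (ι → R)} {P Q : Submodule S M} {I : Ideal S}
    (h : P ≤ I • Q) : smulSpan K P ≤ I • smulSpan K Q := by
  rw [smulSpan, Submodule.span_le]
  rintro _ ⟨κ, hκ, a, ha, rfl⟩
  let φ : M →ₗ[S] ι → M := LinearMap.pi fun j ↦ κ j • LinearMap.id
  have hφ : Q.map φ ≤ smulSpan K Q :=
    Submodule.map_le_iff_le_comap.mpr fun b hb ↦ smul_mem_smulSpan hκ hb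
  exact Submodule.smul_mono le_rfl hφ
    (Submodule.map_smul'' I Q φ ▸ Submodule.mem_map_of_mem (h ha))

variable [Fintype ι] [DecidableEq ι] {N : Type*} [AddCommGroup N] [Module R N]

theorem smul_mem_smulSpan_ker_of_torsion_eq_bot {ε : (ι → R) →ₗ[R] N}
    (hε : Function.Surjective ε) {B : Submodule S M}
    (htf : Submodule.torsion R (B ⊗[R] N) = ⊥) {r : R} (hr : r ∈ nonZeroDivisors R)
    {κ : ι → R} (hκ : κ ∈ LinearMap.ker ε) {a : M} (hκa : ∀ j, κ j • a ∈ B) (hra : r • a ∈ B) :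
    (fun j ↦ κ j • a) ∈ smulSpan (LinearMap.ker ε) B := by
  let e := piScalarRight R R B ι
  let u : B ⊗[R] (ι → R) := e.symm fun j ↦ ⟨κ j • a, hκa j⟩
  have hru : r • u = ⟨r • a, hra⟩ ⊗ₜ κ := by
    apply e.injective
    ext j
    simp [e, u, smul_comm r (κ j) a]
  have hu : ε.lTensor B u = 0 := by
    have : ε.lTensor B u ∈ Submodule.torsion R (B ⊗[R] N) := ⟨⟨r, hr⟩, by
      rw [Submonoid.smul_def, ← map_smul, hru, LinearMap.lTensor_tmul, hκ, tmul_zero]⟩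
    simpa [htf] using this
  obtain ⟨w, hw⟩ := (lTensor_exact B (LinearMap.exact_subtype_ker_map ε) hε u).mp hu
  let Φ : B ⊗[R] (ι → R) →ₗ[R] ι → M :=
    LinearMap.compLeft (B.subtype.restrictScalars R) ι ∘ₗ e.toLinearMap
  have hΦ : (fun j ↦ κ j • a) = Φ u := by ext j; simp [Φ, u]
  suffices ∀ w, Φ (ε.ker.subtype.lTensor B w) ∈ smulSpan (LinearMap.ker ε) B from
    hΦ ▸ hw ▸ this w
  intro w
  induction w using TensorProduct.induction_on with
  | zero => simp
  | tmul b κ' =>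
    convert smul_mem_smulSpan κ'.2 b.2 using 1
    ext j
    simp [Φ, e]
  | add x y hx hy => rw [map_add, map_add]; exact add_mem hx hy

theorem smul_eq_zero_of_mem_ker_of_torsion_eq_bot [IsNoetherianRing S] [Module.Finite S M]
    {ε : (ι → R) →ₗ[R] N} (hε : Function.Surjective ε) {I : Ideal R}
    (hker : LinearMap.ker ε ≤ Submodule.pi Set.univ fun _ ↦ I) {r : R} (hrI : r ∈ I)
    (hr : r ∈ nonZeroDivisors R) {A B : Submodule S M}
    (hIA : I • A.restrictScalars R ≤ B.restrictScalars R) (hBA : B ≤ (⊥ : Ideal S).jacobson • A)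
    (htf : Submodule.torsion R (B ⊗[R] N) = ⊥) {κ : ι → R} (hκ : κ ∈ LinearMap.ker ε) {a : M}
    (ha : a ∈ A) (j : ι) : κ j • a = 0 := by
  have hAB : smulSpan (LinearMap.ker ε) A ≤ smulSpan (LinearMap.ker ε) B := by
    rw [smulSpan, Submodule.span_le]
    rintro _ ⟨κ', hκ', a', ha', rfl⟩
    refine smul_mem_smulSpan_ker_of_torsion_eq_bot hε htf hr hκ' (fun j ↦ ?_) ?_
    · exact hIA (Submodule.smul_mem_smul (hker hκ' j trivial) ha')
    · exact hIA (Submodule.smul_mem_smul hrI ha')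
  have hA : smulSpan (LinearMap.ker ε) A = ⊥ :=
    Submodule.eq_bot_of_le_smul_of_le_jacobson_bot _ _ (IsNoetherian.noetherian _)
      (hAB.trans (smulSpan_le_smul_smulSpan hBA)) le_rfl
  have := smul_mem_smulSpan hκ ha
  rw [hA, Submodule.mem_bot] at this
  exact congrFun this j

end SMulSpan

theorem pow_smul_mem_of_smul_le {R S M : Type*} [CommRing R] [CommRing S] [Algebra R S]
    [AddCommGroup M] [Module R M] [Module S M] [IsScalarTower R S M] {I : Ideal R}
    {F : ℕ → Submodule S M} (hF0 : F 0 = ⊤) {t : ℕ}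
    (hF : ∀ i, 1 ≤ i → i ≤ t → I • (F (i - 1)).restrictScalars R ≤ (F i).restrictScalars R)
    {r : R} (hr : r ∈ I) (x : M) {n : ℕ} (hn : n ≤ t) : r ^ n • x ∈ F n := by
  induction n with
  | zero => simp [hF0]
  | succ n ih =>
    rw [pow_succ', mul_smul]
    exact hF (n + 1) le_add_self hn (Submodule.smul_mem_smul hr (ih (by omega)))

theorem Module.annihilator_eq_bot_of_faithfulSMul_localization {R M : Type*} [CommRing R]
    [IsNoetherianRing R] [AddCommGroup M] [Module R M]
    (h : ∀ (p : Ideal R) [p.IsPrime], p ∈ associatedPrimes R R →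
      FaithfulSMul (Localization p.primeCompl) (LocalizedModule p.primeCompl M)) :
    Module.annihilator R M = ⊥ := by
  refine eq_bot_iff.mpr fun x hx ↦ (Submodule.mem_bot R).mpr (by_contra fun hx0 ↦ ?_)
  obtain ⟨p, hp, hxp⟩ := exists_le_isAssociatedPrime_of_isNoetherianRing R x hx0
  have := hp.isPrime
  have := h p hp
  have hx1 : algebraMap R (Localization p.primeCompl) x = 0 := by
    refine FaithfulSMul.eq_of_smul_eq_smul (α := LocalizedModule p.primeCompl M) fun z ↦ ?_
    induction z using LocalizedModule.induction_on with
    | h m s =>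
      rw [algebraMap_smul, LocalizedModule.smul'_mk, Module.mem_annihilator.mp hx, zero_smul,
        LocalizedModule.zero_mk]
  obtain ⟨⟨s, hs⟩, hsx⟩ := (IsLocalization.map_eq_zero_iff p.primeCompl _ x).mp hx1
  exact hs (hxp (by simpa [Submodule.mem_colon_singleton, mul_comm] using hsx))

theorem free_of_tensor_torsionFree_with_torsionless_general
    (R : Type) [CommRing R] [IsNoetherianRing R] [IsLocalRing R]
    (S : Type) [CommRing S] [IsNoetherianRing S] [Algebra R S]
    (M : Type) [AddCommGroup M] [Module R M] [Module S M] [IsScalarTower R S M]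
    [Module.Finite S M]
    (hsupp : Module.support R M = Set.univ)
    (hnzd : ∃ r ∈ maximalIdeal R, r ∈ nonZeroDivisors R)
    (hfreeloc : ∀ (p : Ideal R) [p.IsPrime], p ∈ associatedPrimes R R →
      Module.Free (Localization p.primeCompl) (LocalizedModule p.primeCompl M))
    (t : ℕ)
    (Mfil : ℕ → Submodule S M)
    (hM0 : Mfil 0 = ⊤)
    (hlow : ∀ i, 1 ≤ i → i ≤ t →
      maximalIdeal R • (Mfil (i - 1)).restrictScalars R ≤ (Mfil i).restrictScalars R)
    (hhigh : ∀ i, 1 ≤ i → i ≤ t → Mfil i ≤ (⊥ : Ideal S).jacobson • Mfil (i - 1))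
    (N : Type) [AddCommGroup N] [Module R N] [Module.Finite R N] [Nontrivial N]
    (i : ℕ) (hi1 : 1 ≤ i) (hit : i ≤ t)
    (htf : Submodule.torsion R (↥(Mfil i) ⊗[R] N) = ⊥) :
    Module.Free R N ∧ Submodule.torsion R ↥(Mfil i) = ⊥ := by
  obtain ⟨r, hrm, hr⟩ := hnzd
  obtain ⟨n, ε, hε, hker⟩ := exists_surjective_ker_le_maximalIdeal (R := R) (N := N)
  have hann : Module.annihilator R M = ⊥ := by
    refine Module.annihilator_eq_bot_of_faithfulSMul_localization fun p _ hp ↦ ?_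
    have : Nontrivial (LocalizedModule p.primeCompl M) :=
      Module.mem_support_iff.mp (hsupp ▸ Set.mem_univ (⟨p, ‹_›⟩ : PrimeSpectrum R))
    have := hfreeloc p hp
    infer_instance
  have hker_bot : LinearMap.ker ε = ⊥ := by
    refine eq_bot_iff.mpr fun κ hκ ↦ (Submodule.mem_bot R).mpr (funext fun j ↦ ?_)
    have hκr : κ j * r ^ (i - 1) ∈ Module.annihilator R M := by
      refine Module.mem_annihilator.mpr fun x ↦ ?_
      rw [mul_smul]
      exact smul_eq_zero_of_mem_ker_of_torsion_eq_bot hε hker hrm hr (hlow i hi1 hit)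
        (hhigh i hi1 hit) htf hκ (pow_smul_mem_of_smul_le hM0 hlow hrm x (by omega)) j
    rw [hann, Submodule.mem_bot] at hκr
    exact (mul_right_mem_nonZeroDivisors_eq_zero_iff (pow_mem hr _)).mp hκr
  have : Module.Free R N :=
    .of_equiv (LinearEquiv.ofBijective ε ⟨LinearMap.ker_eq_bot.mp hker_bot, hε⟩)
  exact ⟨this, Submodule.torsion_eq_bot_of_torsion_tensorProduct_eq_bot htf⟩

theorem free_of_tensor_torsionFree_with_torsionless
    (R : Type) [CommRing R] [IsNoetherianRing R] [IsLocalRing R]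
    (S : Type) [CommRing S] [IsNoetherianRing S] [Algebra R S]
    (hmS : (maximalIdeal R).map (algebraMap R S) ≤ (⊥ : Ideal S).jacobson)
    (M : Type) [AddCommGroup M] [Module R M] [Module S M] [IsScalarTower R S M]
    [Nontrivial M] [Module.Finite S M] [Module.Finite R M]
    (hsupp : Module.support R M = Set.univ)
    (hnzd : ∃ r ∈ maximalIdeal R, r ∈ nonZeroDivisors R)
    (hfreeloc : ∀ (p : Ideal R) [p.IsPrime], p ∈ associatedPrimes R R →
      Module.Free (Localization p.primeCompl) (LocalizedModule p.primeCompl M))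
    (t : ℕ) (ht : 1 ≤ t)
    (Mfil : ℕ → Submodule S M)
    (hM0 : Mfil 0 = ⊤)
    (hne : ∀ i ≤ t, Mfil i ≠ ⊥)
    (hlow : ∀ i, 1 ≤ i → i ≤ t →
      maximalIdeal R • (Mfil (i - 1)).restrictScalars R ≤ (Mfil i).restrictScalars R)
    (hhigh : ∀ i, 1 ≤ i → i ≤ t → Mfil i ≤ (⊥ : Ideal S).jacobson • Mfil (i - 1))
    (N : Type) [AddCommGroup N] [Module R N] [Module.Finite R N] [Nontrivial N]
    (htorsionless : Function.Injective (Module.Dual.eval R N))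
    (i : ℕ) (hi1 : 1 ≤ i) (hit : i ≤ t)
    (htf : Submodule.torsion R (↥(Mfil i) ⊗[R] N) = ⊥) :
    Module.Free R N ∧ Submodule.torsion R ↥(Mfil i) = ⊥ :=
  free_of_tensor_torsionFree_with_torsionless_general R S M hsupp hnzd hfreeloc t Mfil hM0 hlow
    hhigh N i hi1 hit htf
end
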